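/- arXiv:0812.1712 — 2 statements merged into one kernel-verified Lean document; each statement's English description precedes it below -/
import Mathlib

section
/- Let Φ : ℝ → ℝ be twice continuously differentiable with Φ″(w) > 0 for all w ∈ [−1, 1], and let W : ℝ → ℝ be a nonconstant, nondecreasing, continuously differentiable function taking values in [−1, 1] and satisfying W(φ) = (𝒜Φ′(𝒜W))(φ) for all φ ∈ ℝ. Then W is strictly increasing: W′(φ) > 0 for every φ ∈ ℝ. -/
open MeasureTheory Filter Topology

/-- The averaging operator `(𝒜U)(φ) = ∫_{φ-1/2}..(φ+1/2), U(s) ds`. -/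
noncomputable def avg (U : ℝ → ℝ) (φ : ℝ) : ℝ := ∫ s in (φ - 1/2)..(φ + 1/2), U s

lemma hasDerivAt_avg (U : ℝ → ℝ) (hU : Continuous U) (φ : ℝ) :
    HasDerivAt (avg U) (U (φ + 1/2) - U (φ - 1/2)) φ := by
  have hF : ∀ x : ℝ, HasDerivAt (fun u => ∫ s in (0:ℝ)..u, U s) (U x) x := fun x =>
    intervalIntegral.integral_hasDerivAt_right (hU.intervalIntegrable _ _)
      (hU.stronglyMeasurableAtFilter _ _) hU.continuousAt
  have h1 : HasDerivAt (fun φ : ℝ => ∫ s in (0:ℝ)..(φ + 1/2), U s) (U (φ + 1/2)) φ := by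
    have := (hF (φ + 1/2)).comp φ ((hasDerivAt_id φ).add_const (1/2:ℝ))
    simpa [Function.comp_def] using this
  have h2 : HasDerivAt (fun φ : ℝ => ∫ s in (0:ℝ)..(φ - 1/2), U s) (U (φ - 1/2)) φ := by
    have := (hF (φ - 1/2)).comp φ ((hasDerivAt_id φ).sub_const (1/2:ℝ))
    simpa [Function.comp_def] using this
  have key : avg U = fun φ : ℝ =>
      (∫ s in (0:ℝ)..(φ + 1/2), U s) - ∫ s in (0:ℝ)..(φ - 1/2), U s := by
    funext ψ
    rw [intervalIntegral.integral_interval_sub_left (hU.intervalIntegrable _ _)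
      (hU.intervalIntegrable _ _)]
    rfl
  rw [key]
  exact h1.sub h2

theorem front_strictly_increasing
    (Φ : ℝ → ℝ) (hΦ : ContDiff ℝ 2 Φ)
    (hC : ∀ w ∈ Set.Icc (-1 : ℝ) 1, 0 < deriv (deriv Φ) w)
    (W : ℝ → ℝ) (hWnc : ∃ φ₁ φ₂, W φ₁ ≠ W φ₂)
    (hWmono : Monotone W) (hWreg : ContDiff ℝ 1 W)
    (hWrange : ∀ φ, W φ ∈ Set.Icc (-1 : ℝ) 1)
    (hWeq : ∀ φ, W φ = avg (fun s => deriv Φ (avg W s)) φ) :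
    ∀ φ, 0 < deriv W φ := by
  have hWc : Continuous W := hWreg.continuous
  -- the averaged profile
  have hA : ∀ φ, HasDerivAt (avg W) (W (φ + 1/2) - W (φ - 1/2)) φ :=
    hasDerivAt_avg W hWc
  have hAc : Continuous (avg W) := by
    have : Differentiable ℝ (avg W) := fun x => (hA x).differentiableAt
    exact this.continuous
  -- range of avg W
  have hArange : ∀ φ, avg W φ ∈ Set.Icc (-1 : ℝ) 1 := by
    intro φ
    have hle : (φ - 1/2 : ℝ) ≤ φ + 1/2 := by linarith
    constructor
    · have h := intervalIntegral.integral_mono_on (μ := volume) (f := fun _ : ℝ => (-1 : ℝ)) (g := W) hle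
        (intervalIntegrable_const) (hWc.intervalIntegrable _ _)
        (fun x _ => (hWrange x).1)
      simp [avg] at h ⊢
      linarith
    · have h := intervalIntegral.integral_mono_on (μ := volume) (f := W) (g := fun _ : ℝ => (1 : ℝ)) hle
        (hWc.intervalIntegrable _ _) (intervalIntegrable_const)
        (fun x _ => (hWrange x).2)
      simp [avg] at h ⊢
      linarith
  -- monotonicity of avg W
  have hAmono : Monotone (avg W) := by
    apply monotone_of_deriv_nonneg (fun x => (hA x).differentiableAt)
    intro x
    rw [(hA x).deriv]
    have : W (x - 1/2) ≤ W (x + 1/2) := hWmono (by linarith)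
    linarith
  -- Φ' strictly monotone on [-1,1]
  have hΦ'c : Continuous (deriv Φ) := hΦ.continuous_deriv one_le_two
  have hsm : StrictMonoOn (deriv Φ) (Set.Icc (-1 : ℝ) 1) := by
    apply strictMonoOn_of_deriv_pos (convex_Icc _ _) hΦ'c.continuousOn
    intro x hx
    exact hC x (interior_subset hx)
  -- the derivative formula for W
  have hg : Continuous (fun s => deriv Φ (avg W s)) := hΦ'c.comp hAc
  have hWeq' : W = avg (fun s => deriv Φ (avg W s)) := funext hWeq
  have hW' : ∀ φ, deriv W φ = deriv Φ (avg W (φ + 1/2)) - deriv Φ (avg W (φ - 1/2)) := by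
    intro φ
    conv_lhs => rw [hWeq']
    exact (hasDerivAt_avg _ hg φ).deriv
  -- deriv W is nonneg
  have hWd : Differentiable ℝ W := hWreg.differentiable one_ne_zero
  have hnonneg : ∀ φ, 0 ≤ deriv W φ := by
    intro φ
    rw [hW' φ]
    have h1 : avg W (φ - 1/2) ≤ avg W (φ + 1/2) := hAmono (by linarith)
    have := hsm.monotoneOn (hArange _) (hArange _) h1
    linarith
  -- key: deriv W φ = 0 forces W constant on [φ-1, φ+1]
  have hkey : ∀ φ, deriv W φ = 0 → ∀ x ∈ Set.Icc (φ - 1) (φ + 1), W x = W φ := by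
    intro φ h0 x hx
    have heq : avg W (φ + 1/2) = avg W (φ - 1/2) := by
      have h1 : avg W (φ - 1/2) ≤ avg W (φ + 1/2) := hAmono (by linarith)
      have h2 : deriv Φ (avg W (φ + 1/2)) = deriv Φ (avg W (φ - 1/2)) := by
        have := hW' φ; rw [h0] at this; linarith
      exact (hsm.injOn (hArange _) (hArange _) h2)
    -- rewrite as integrals over [φ, φ+1] and [φ-1, φ]
    have hints : (∫ s in φ..(φ+1), W s) = ∫ s in (φ-1)..φ, W s := by
      have e1 : (∫ s in φ..(φ+1), W s) = avg W (φ + 1/2) := by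
        unfold avg; congr 1 <;> ring
      have e2 : (∫ s in (φ-1)..φ, W s) = avg W (φ - 1/2) := by
        unfold avg; congr 1 <;> ring
      rw [e1, e2, heq]
    set c := W φ with hc
    have hR : (∫ s in φ..(φ+1), (W s - c)) = (∫ s in φ..(φ+1), W s) - c := by
      rw [intervalIntegral.integral_sub (hWc.intervalIntegrable _ _) intervalIntegrable_const]
      simp
    have hL : (∫ s in (φ-1)..φ, (W s - c)) = (∫ s in (φ-1)..φ, W s) - c := by
      rw [intervalIntegral.integral_sub (hWc.intervalIntegrable _ _) intervalIntegrable_const]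
      simp
    have hRnonneg : 0 ≤ ∫ s in φ..(φ+1), (W s - c) :=
      intervalIntegral.integral_nonneg (by linarith) (fun u hu => by
        have := hWmono hu.1; simp only [hc]; linarith)
    have hLnonpos : (∫ s in (φ-1)..φ, (W s - c)) ≤ 0 := by
      have : (∫ s in (φ-1)..φ, (c - W s)) ≥ 0 :=
        intervalIntegral.integral_nonneg (by linarith) (fun u hu => by
          have := hWmono hu.2; simp only [hc]; linarith)
      have hneg : (∫ s in (φ-1)..φ, (c - W s)) = - ∫ s in (φ-1)..φ, (W s - c) := by
        rw [← intervalIntegral.integral_neg]; congr 1; funext s; ring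
      linarith [hneg ▸ this]
    have hRzero : (∫ s in φ..(φ+1), (W s - c)) = 0 := by
      have : (∫ s in φ..(φ+1), (W s - c)) = ∫ s in (φ-1)..φ, (W s - c) := by
        rw [hR, hL, hints]
      linarith [this ▸ hLnonpos]
    have hLzero : (∫ s in (φ-1)..φ, (W s - c)) = 0 := by
      rw [hL, ← hints, ← hR, hRzero]
    -- now deduce pointwise constancy
    rcases le_or_gt x φ with hxφ | hxφ
    · -- x ∈ [φ-1, φ]; use c - W nonneg with zero integral
      by_contra hne
      have hlt : W x < c := lt_of_le_of_ne (hWmono hxφ) hne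
      have hpos : 0 < ∫ s in (φ-1)..φ, (c - W s) := by
        apply intervalIntegral.integral_pos (by linarith)
        · exact (continuous_const.sub hWc).continuousOn
        · intro s hs; have := hWmono hs.2; linarith
        · exact ⟨x, ⟨hx.1, hxφ⟩, by linarith⟩
      have hneg : (∫ s in (φ-1)..φ, (c - W s)) = - ∫ s in (φ-1)..φ, (W s - c) := by
        rw [← intervalIntegral.integral_neg]; congr 1; funext s; ring
      rw [hneg, hLzero] at hpos; simp at hpos
    · by_contra hne
      have hlt : c < W x := lt_of_le_of_ne (hWmono hxφ.le) (Ne.symm hne)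
      have hpos : 0 < ∫ s in φ..(φ+1), (W s - c) := by
        apply intervalIntegral.integral_pos (by linarith)
        · exact (hWc.sub continuous_const).continuousOn
        · intro s hs; have := hWmono hs.1.le; linarith
        · exact ⟨x, ⟨hxφ.le, hx.2⟩, by linarith⟩
      rw [hRzero] at hpos; simp at hpos
  -- the zero set of deriv W is clopen
  set Z : Set ℝ := {φ | deriv W φ = 0} with hZ
  have hWdc : Continuous (deriv W) := hWreg.continuous_deriv le_rfl
  have hclosed : IsClosed Z := isClosed_eq hWdc continuous_const
  have hopen : IsOpen Z := by
    rw [isOpen_iff_mem_nhds]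
    intro φ hφ
    have hsub : Set.Ioo (φ - 1) (φ + 1) ⊆ Z := by
      intro x hxmem
      have hconst : ∀ y ∈ Set.Ioo (φ - 1) (φ + 1), W y = W φ := fun y hy =>
        hkey φ hφ y ⟨hy.1.le, hy.2.le⟩
      have hev : W =ᶠ[𝓝 x] (fun _ => W φ) := by
        filter_upwards [isOpen_Ioo.mem_nhds hxmem] with y hy using hconst y hy
      show deriv W x = 0
      rw [hev.deriv_eq, deriv_const]
    exact Filter.mem_of_superset (isOpen_Ioo.mem_nhds (by constructor <;> linarith)) hsub
  -- conclude
  intro φ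
  rcases lt_or_eq_of_le (hnonneg φ) with h | h
  · exact h
  · exfalso
    have hZne : Z ≠ ∅ := by
      intro he
      have : φ ∈ Z := h.symm
      rw [he] at this; exact this
    have hZuniv : Z = Set.univ := (isClopen_iff.mp ⟨hclosed, hopen⟩).resolve_left hZne
    obtain ⟨φ₁, φ₂, hne⟩ := hWnc
    exact hne (is_const_of_deriv_eq_zero hWd (fun x => by
      have : x ∈ Z := hZuniv ▸ Set.mem_univ x
      exact this) φ₁ φ₂)
end

section
/- For every λ with 0 < λ < 1 there exists exactly one τ > 0 satisfying the characteristic equation τ² = 2λ(cosh τ − 1); moreover τ = 0 is the only other nonnegative real solution of this equation. -/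
open Real Set

lemma aux_sinh_pos {x : ℝ} (hx : 0 < x) : 0 < Real.sinh x :=
  Real.sinh_pos_iff.mpr hx

/-- `sinh x < x * cosh x` for `x > 0`. -/
lemma aux_sinh_lt {x : ℝ} (hx : 0 < x) : Real.sinh x < x * Real.cosh x := by
  have hmono : StrictMonoOn (fun t : ℝ => t * Real.cosh t - Real.sinh t) (Ici 0) := by
    apply strictMonoOn_of_deriv_pos (convex_Ici 0)
    · exact ((continuous_id.mul Real.continuous_cosh).sub Real.continuous_sinh).continuousOn
    · intro t ht
      rw [interior_Ici] at ht
      have h := ((hasDerivAt_id' t).mul (Real.hasDerivAt_cosh t)).sub (Real.hasDerivAt_sinh t)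
      rw [show deriv (fun t : ℝ => t * Real.cosh t - Real.sinh t) t = _ from h.deriv]
      have ht' : (0:ℝ) < t := ht
      nlinarith [mul_pos ht' (aux_sinh_pos ht')]
  have := hmono (self_mem_Ici) (le_of_lt hx : (0:ℝ) ≤ x) hx
  simpa using this

/-- `2 * (cosh x - 1) < x * sinh x` for `x > 0`. -/
lemma aux_two_cosh_lt {x : ℝ} (hx : 0 < x) : 2 * (Real.cosh x - 1) < x * Real.sinh x := by
  have hmono : StrictMonoOn (fun t : ℝ => t * Real.sinh t - 2 * (Real.cosh t - 1)) (Ici 0) := by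
    apply strictMonoOn_of_deriv_pos (convex_Ici 0)
    · exact ((continuous_id.mul Real.continuous_sinh).sub
        (continuous_const.mul (Real.continuous_cosh.sub continuous_const))).continuousOn
    · intro t ht
      rw [interior_Ici] at ht
      have h := ((hasDerivAt_id' t).mul (Real.hasDerivAt_sinh t)).sub
          (((Real.hasDerivAt_cosh t).sub_const 1).const_mul 2)
      rw [show deriv (fun t : ℝ => t * Real.sinh t - 2 * (Real.cosh t - 1)) t = _ from h.deriv]
      have := aux_sinh_lt ht
      nlinarith
  have := hmono (self_mem_Ici) (le_of_lt hx : (0:ℝ) ≤ x) hx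
  simp only [zero_mul, Real.sinh_zero, Real.cosh_zero, mul_zero, sub_self, sub_zero,
    mul_zero] at this
  linarith

/-- `cosh x - 1 < x^2 / 2 * cosh x` for `x > 0`. -/
lemma aux_cosh_sub_one_lt {x : ℝ} (hx : 0 < x) :
    Real.cosh x - 1 < x ^ 2 / 2 * Real.cosh x := by
  have hmono : StrictMonoOn
      (fun t : ℝ => t ^ 2 / 2 * Real.cosh t - (Real.cosh t - 1)) (Ici 0) := by
    apply strictMonoOn_of_deriv_pos (convex_Ici 0)
    · exact (((continuous_pow 2).div_const 2).mul Real.continuous_cosh |>.sub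
        (Real.continuous_cosh.sub continuous_const)).continuousOn
    · intro t ht
      rw [interior_Ici] at ht
      have h := (((hasDerivAt_pow 2 t).div_const 2).mul (Real.hasDerivAt_cosh t)).sub
          ((Real.hasDerivAt_cosh t).sub_const 1)
      rw [show deriv (fun t : ℝ => t ^ 2 / 2 * Real.cosh t - (Real.cosh t - 1)) t = _ from h.deriv]
      have h1 := aux_sinh_lt ht
      have h2 := aux_sinh_pos ht
      push_cast
      nlinarith
  have := hmono (self_mem_Ici) (le_of_lt hx : (0:ℝ) ≤ x) hx
  simp only [ne_eq, OfNat.ofNat_ne_zero, not_false_eq_true, zero_pow, zero_div, zero_mul,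
    Real.cosh_zero, sub_self, sub_zero] at this
  linarith

/-- The ratio `(cosh x - 1) / x ^ 2` is strictly increasing on `(0, ∞)`. -/
lemma aux_ratio_mono : StrictMonoOn (fun t : ℝ => (Real.cosh t - 1) / t ^ 2) (Ioi 0) := by
  apply strictMonoOn_of_deriv_pos (convex_Ioi 0)
  · apply ContinuousOn.div (Real.continuous_cosh.sub continuous_const).continuousOn
      (continuous_pow 2).continuousOn
    intro t ht
    exact pow_ne_zero 2 (ne_of_gt ht)
  · intro t ht
    rw [interior_Ioi] at ht
    have ht2 : (t : ℝ) ^ 2 ≠ 0 := pow_ne_zero 2 (ne_of_gt ht)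
    have h := ((Real.hasDerivAt_cosh t).sub_const 1).div (hasDerivAt_pow 2 t) ht2
    rw [show deriv (fun t : ℝ => (Real.cosh t - 1) / t ^ 2) t = _ from h.deriv]
    apply div_pos
    · push_cast
      nlinarith [aux_two_cosh_lt ht, mul_pos ht (sub_pos.mpr (aux_two_cosh_lt ht))]
    · positivity

theorem characteristic_equation_roots (lam : ℝ) (h0 : 0 < lam) (h1 : lam < 1) :
    ∃ τp : ℝ, 0 < τp ∧ τp ^ 2 = 2 * lam * (Real.cosh τp - 1) ∧
      ∀ τ : ℝ, 0 ≤ τ → τ ^ 2 = 2 * lam * (Real.cosh τ - 1) → τ = 0 ∨ τ = τp := by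
  -- the function F
  set F : ℝ → ℝ := fun t => 2 * lam * (Real.cosh t - 1) - t ^ 2 with hF
  have hinvlam : (1:ℝ) < 1 / lam := by rw [lt_div_iff₀ h0]; linarith
  -- a point where F < 0
  obtain ⟨a, ha0, hFa⟩ : ∃ a : ℝ, 0 < a ∧ F a < 0 := by
    have hlogpos := Real.log_pos hinvlam
    refine ⟨Real.log (1 / lam) / 2, by linarith, ?_⟩
    set a := Real.log (1 / lam) / 2 with hadef
    have ha0 : 0 < a := by rw [hadef]; linarith
    have hexp : Real.exp a ≤ 1 / lam := by
      have h1e : 1 ≤ Real.exp a := by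
        have := Real.add_one_le_exp a; linarith
      calc Real.exp a ≤ Real.exp a * Real.exp a := le_mul_of_one_le_left (Real.exp_pos a).le h1e
        _ = Real.exp (a + a) := (Real.exp_add a a).symm
        _ = 1 / lam := by
            rw [hadef, show Real.log (1/lam) / 2 + Real.log (1/lam) / 2
              = Real.log (1/lam) by ring]
            exact Real.exp_log (by positivity)
    have hcosh : Real.cosh a < 1 / lam := by
      have : Real.cosh a < Real.exp a := by
        rw [Real.cosh_eq]
        have : Real.exp (-a) < Real.exp a := Real.exp_lt_exp.mpr (by linarith)
        linarith
      linarith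
    have hlt := aux_cosh_sub_one_lt ha0
    have hstep : 2 * lam * (Real.cosh a - 1) < 2 * lam * (a ^ 2 / 2 * Real.cosh a) :=
      mul_lt_mul_of_pos_left hlt (by linarith)
    have hle : lam * Real.cosh a < 1 := by
      calc lam * Real.cosh a < lam * (1 / lam) := mul_lt_mul_of_pos_left hcosh h0
        _ = 1 := by field_simp
    have h2 : 2 * lam * (a ^ 2 / 2 * Real.cosh a) ≤ a ^ 2 := by nlinarith [sq_nonneg a]
    simp only [hF]; linarith
  -- a point where F > 0
  obtain ⟨b, hab, hb1, hFb⟩ : ∃ b : ℝ, a < b ∧ 1 ≤ b ∧ 0 < F b := by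
    have h4 : Filter.Tendsto (fun x : ℝ => Real.exp x / x ^ 2) Filter.atTop Filter.atTop :=
      Real.tendsto_exp_div_pow_atTop 2
    have hev : ∀ᶠ b in Filter.atTop, (4 / lam : ℝ) ≤ Real.exp b / b ^ 2 :=
      h4.eventually_ge_atTop _
    have hev2 : ∀ᶠ b : ℝ in Filter.atTop, a < b := Filter.eventually_gt_atTop a
    have hev3 : ∀ᶠ b : ℝ in Filter.atTop, (1:ℝ) ≤ b := Filter.eventually_ge_atTop 1
    obtain ⟨b, ⟨hb4, hba⟩, hb1⟩ := ((hev.and hev2).and hev3).exists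
    refine ⟨b, hba, hb1, ?_⟩
    have hb0 : 0 < b := lt_of_lt_of_le one_pos hb1
    have hb2 : (0:ℝ) < b ^ 2 := by positivity
    have hexp : 4 / lam * b ^ 2 ≤ Real.exp b := by
      rw [le_div_iff₀ hb2] at hb4
      linarith
    have hcosh : Real.exp b / 2 ≤ Real.cosh b := by
      rw [Real.cosh_eq]
      have := (Real.exp_pos (-b)).le
      linarith
    have hbsq : (1:ℝ) ≤ b ^ 2 := by nlinarith
    have hkey : 4 * b ^ 2 ≤ lam * Real.exp b := by
      have h := mul_le_mul_of_nonneg_left hexp h0.le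
      calc 4 * b ^ 2 = lam * (4 / lam * b ^ 2) := by field_simp
        _ ≤ lam * Real.exp b := h
    simp only [hF]
    nlinarith [mul_le_mul_of_nonneg_left hcosh (by linarith : (0:ℝ) ≤ 2 * lam)]
  -- IVT
  have hcont : ContinuousOn F (Icc a b) :=
    ((continuous_const.mul (Real.continuous_cosh.sub continuous_const)).sub
      (continuous_pow 2)).continuousOn
  obtain ⟨τp, hτmem, hτ0⟩ : ∃ τp ∈ Icc a b, F τp = 0 :=
    intermediate_value_Icc hab.le hcont ⟨hFa.le, hFb.le⟩
  have hτp_pos : 0 < τp := lt_of_lt_of_le ha0 hτmem.1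
  have hroot : τp ^ 2 = 2 * lam * (Real.cosh τp - 1) := by
    simp only [hF] at hτ0; linarith
  refine ⟨τp, hτp_pos, hroot, ?_⟩
  intro τ hτ hτeq
  rcases eq_or_lt_of_le hτ with h | h
  · exact Or.inl h.symm
  · right
    have hratio : ∀ t : ℝ, 0 < t → t ^ 2 = 2 * lam * (Real.cosh t - 1) →
        (Real.cosh t - 1) / t ^ 2 = 1 / (2 * lam) := by
      intro t ht heq
      have ht2 : (t:ℝ) ^ 2 ≠ 0 := pow_ne_zero 2 (ne_of_gt ht)
      have h2l : (2 * lam : ℝ) ≠ 0 := by positivity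
      have hc : Real.cosh t - 1 = t ^ 2 / (2 * lam) := by
        field_simp
        linarith [heq]
      rw [hc]
      field_simp
    have h1' := hratio τ h hτeq
    have h2' := hratio τp hτp_pos hroot
    exact aux_ratio_mono.injOn (mem_Ioi.mpr h) (mem_Ioi.mpr hτp_pos)
      (by simpa using h1'.trans h2'.symm)
end
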